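/- Let a > 0, t₁ < t₂, and let x : ℝ → ℝ be continuously differentiable on [t₁, t₂] with derivative ẋ that is Lipschitz with constant a on [t₁, t₂]. Set v₂ := ẋ(t₂) and P := x(t₂), and suppose x(t₁) ≤ P − v₂(t₂ − t₁) − (a/2)(t₂ − t₁)². Then x(s) = P − v₂(t₂ − s) − (a/2)(t₂ − s)² for all s ∈ [t₁, t₂]; that is, x decelerates maximally at rate a throughout [t₁, t₂]. -/

import Mathlib

/-!
Subtracting the maximal deceleration curve through `(t₂, x t₂)` with slope `ẋ t₂` leaves a
function whose derivative `ẋ s - ẋ t₂ - a (t₂ - s)` is nonpositive, by the Lipschitz bound on `ẋ`.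
The difference is therefore antitone; it vanishes at `t₂` and is `≤ 0` at `t₁`, so it vanishes
on all of `[t₁, t₂]`.
-/

open Set NNReal

noncomputable def brakingCurve (a t₂ P v : ℝ) (s : ℝ) : ℝ :=
  P - v * (t₂ - s) - a / 2 * (t₂ - s) ^ 2

theorem brakingCurve_self (a t₂ P v : ℝ) : brakingCurve a t₂ P v t₂ = P := by
  simp [brakingCurve]

theorem hasDerivAt_brakingCurve (a t₂ P v s : ℝ) :
    HasDerivAt (brakingCurve a t₂ P v) (v + a * (t₂ - s)) s := by
  have hlin : HasDerivAt (fun s : ℝ => t₂ - s) (-1) s := (hasDerivAt_id s).const_sub t₂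
  refine (((hlin.const_mul v).const_sub P).sub ((hlin.fun_pow 2).const_mul (a / 2))).congr_deriv ?_
  push_cast
  ring

theorem AntitoneOn.eq_right_of_left_le {α β : Type*} [Preorder α] [PartialOrder β]
    {f : α → β} {a b s : α} (hf : AntitoneOn f (Icc a b)) (hab : f a ≤ f b) (hs : s ∈ Icc a b) :
    f s = f b :=
  have hb : b ∈ Icc a b := ⟨hs.1.trans hs.2, le_rfl⟩
  have ha : a ∈ Icc a b := ⟨le_rfl, hs.1.trans hs.2⟩
  le_antisymm ((hf ha hs hs.1).trans hab) (hf hs hb hs.2)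

theorem antitoneOn_sub_brakingCurve {x : ℝ → ℝ} {K : ℝ≥0} {t₁ t₂ : ℝ} (ht : t₁ ≤ t₂)
    (hcont : ContinuousOn x (Icc t₁ t₂)) (hdiff : DifferentiableOn ℝ x (Ioo t₁ t₂))
    (hLip : LipschitzOnWith K (deriv x) (Icc t₁ t₂)) (P : ℝ) :
    AntitoneOn (x - brakingCurve K t₂ P (deriv x t₂)) (Icc t₁ t₂) := by
  have hderiv : ∀ s ∈ Ioo t₁ t₂, HasDerivAt (x - brakingCurve K t₂ P (deriv x t₂))
      (deriv x s - (deriv x t₂ + K * (t₂ - s))) s := fun s hs =>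
    ((hdiff s hs).differentiableAt (Ioo_mem_nhds hs.1 hs.2)).hasDerivAt.sub
      (hasDerivAt_brakingCurve _ _ _ _ s)
  refine antitoneOn_of_deriv_nonpos (convex_Icc t₁ t₂)
    (hcont.sub (continuous_iff_continuousAt.2 fun s =>
      (hasDerivAt_brakingCurve _ _ _ _ s).continuousAt).continuousOn)
    (by rw [interior_Icc]; exact fun s hs => (hderiv s hs).differentiableAt.differentiableWithinAt)
    fun s hs => ?_
  rw [interior_Icc] at hs
  have hbound : deriv x s ≤ deriv x t₂ + K * dist s t₂ :=
    hLip.le_add_mul (Ioo_subset_Icc_self hs) ⟨ht, le_rfl⟩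
  rw [dist_comm, Real.dist_eq, abs_of_pos (sub_pos.2 hs.2)] at hbound
  rw [(hderiv s hs).deriv]
  linarith

theorem maximal_deceleration_rigidity
    (a t₁ t₂ : ℝ) (ha : 0 < a) (x : ℝ → ℝ)
    (hC1 : ContDiffOn ℝ 1 x (Set.Icc t₁ t₂))
    (hLip : LipschitzOnWith (Real.toNNReal a) (deriv x) (Set.Icc t₁ t₂))
    (hstart : x t₁ ≤ x t₂ - deriv x t₂ * (t₂ - t₁) - a / 2 * (t₂ - t₁) ^ 2) :
    ∀ s ∈ Set.Icc t₁ t₂,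
      x s = x t₂ - deriv x t₂ * (t₂ - s) - a / 2 * (t₂ - s) ^ 2 := by
  intro s hs
  have hanti := antitoneOn_sub_brakingCurve (hs.1.trans hs.2) hC1.continuousOn
    ((hC1.differentiableOn one_ne_zero).mono Ioo_subset_Icc_self) hLip (x t₂)
  rw [Real.coe_toNNReal a ha.le] at hanti
  have hleft : (x - brakingCurve a t₂ (x t₂) (deriv x t₂)) t₁ ≤ 0 := by
    simp only [Pi.sub_apply, brakingCurve]
    linarith
  have hright : (x - brakingCurve a t₂ (x t₂) (deriv x t₂)) t₂ = 0 := by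
    rw [Pi.sub_apply, brakingCurve_self, sub_self]
  have heq := hanti.eq_right_of_left_le (hleft.trans hright.ge) hs
  rwa [hright, Pi.sub_apply, sub_eq_zero] at heq
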